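/- arXiv:1511.00310 — 6 statements merged into one kernel-verified Lean document; each statement's English description precedes it below -/
import Mathlib

section
/- Let A be an m×n integer matrix all of whose entries have absolute value at most α, let b ∈ ℤ^m, let C be a p×n integer matrix and d ∈ ℤ^p, and let y ∈ ℤⁿ be a vector with Cy = 0 and ‖y‖∞ ≤ M for a positive integer M. Suppose x ∈ ℤⁿ is a feasible solution, i.e. Ax ≤ b and Cx = d, and suppose that x + y is not feasible or x − y is not feasible (i.e. A(x+y) ≤ b fails or A(x−y) ≤ b fails). Then there exists a row index j such that b_j − α·n·M ≤ a_j^T x ≤ b_j, where a_j^T is the j-th row of A, and moreover a_j is not a linear combination (over the rationals/reals) of the rows of C. -/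
open Matrix

lemma aux_combo (n m p : ℕ) (A : Matrix (Fin m) (Fin n) ℤ)
    (C : Matrix (Fin p) (Fin n) ℤ) (y : Fin n → ℤ) (hy : C.mulVec y = 0)
    (j : Fin m) (lam : Fin p → ℚ)
    (hlam : (fun i => (A j i : ℚ)) = fun i => ∑ l, lam l * (C l i : ℚ)) :
    A.mulVec y j = 0 := by
  have hl : ∀ i, (A j i : ℚ) = ∑ l, lam l * (C l i : ℚ) := fun i => congrFun hlam i
  have hcast : ((A.mulVec y j : ℤ) : ℚ) = 0 := by
    have h1 : ((A.mulVec y j : ℤ) : ℚ) = ∑ i, (A j i : ℚ) * (y i : ℚ) := by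
      simp [mulVec, dotProduct]
    rw [h1]
    have h2 : ∀ l, ∑ i, (C l i : ℚ) * (y i : ℚ) = 0 := by
      intro l
      have : ((C.mulVec y l : ℤ) : ℚ) = 0 := by rw [hy]; simp
      rw [← this]; simp [mulVec, dotProduct]
    calc ∑ i, (A j i : ℚ) * (y i : ℚ)
        = ∑ i, (∑ l, lam l * (C l i : ℚ)) * (y i : ℚ) := by simp only [hl]
      _ = ∑ i, ∑ l, lam l * ((C l i : ℚ) * (y i : ℚ)) := by
          simp [Finset.sum_mul, mul_assoc]
      _ = ∑ l, ∑ i, lam l * ((C l i : ℚ) * (y i : ℚ)) := Finset.sum_comm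
      _ = ∑ l, lam l * ∑ i, (C l i : ℚ) * (y i : ℚ) := by
          simp [Finset.mul_sum]
      _ = 0 := by simp [h2]
  exact_mod_cast hcast

/-- if `x` is feasible (`Ax ≤ b`, `Cx = d`), `Cy = 0`, `‖y‖∞ ≤ M`, and
`x + y` or `x - y` is infeasible, then some row `a_j` of `A`, linearly independent of
the rows of `C`, satisfies `b_j - α n M ≤ a_jᵀ x ≤ b_j`. -/
theorem stmt_1 (n m p α M : ℕ) (hα : 0 < α) (hM : 0 < M)
    (A : Matrix (Fin m) (Fin n) ℤ) (hA : ∀ i j, |A i j| ≤ (α : ℤ))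
    (b : Fin m → ℤ)
    (C : Matrix (Fin p) (Fin n) ℤ) (d : Fin p → ℤ)
    (y : Fin n → ℤ) (hy : C.mulVec y = 0) (hyM : ∀ i, |y i| ≤ (M : ℤ))
    (x : Fin n → ℤ) (hxA : A.mulVec x ≤ b) (hxC : C.mulVec x = d)
    (hshallow : ¬ A.mulVec (x + y) ≤ b ∨ ¬ A.mulVec (x - y) ≤ b) :
    ∃ j : Fin m,
      b j - (α : ℤ) * n * M ≤ A.mulVec x j ∧ A.mulVec x j ≤ b j ∧
      ¬ ∃ lam : Fin p → ℚ,
        (fun i => (A j i : ℚ)) = fun i => ∑ l, lam l * (C l i : ℚ) := by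
  have hbound : ∀ j, |A.mulVec y j| ≤ (α : ℤ) * n * M := by
    intro j
    have h1 : A.mulVec y j = ∑ i, A j i * y i := by simp [mulVec, dotProduct]
    rw [h1]
    calc |∑ i, A j i * y i| ≤ ∑ i, |A j i * y i| := Finset.abs_sum_le_sum_abs _ _
      _ ≤ ∑ _i : Fin n, (α : ℤ) * M := by
          refine Finset.sum_le_sum fun i _ => ?_
          rw [abs_mul]
          exact mul_le_mul (hA j i) (hyM i) (abs_nonneg _) (Int.ofNat_nonneg α)
      _ = (α : ℤ) * n * M := by simp [Finset.sum_const]; ring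
  rcases hshallow with h | h
  · rw [Pi.le_def] at h; push_neg at h
    obtain ⟨j, hj⟩ := h
    rw [mulVec_add] at hj
    have hax := hxA j
    have hb := hbound j
    have habs := abs_le.mp hb
    refine ⟨j, by simp only [Pi.add_apply] at hj; linarith, hax, ?_⟩
    rintro ⟨lam, hlam⟩
    have h0 := aux_combo n m p A C y hy j lam hlam
    simp only [Pi.add_apply] at hj
    linarith
  · rw [Pi.le_def] at h; push_neg at h
    obtain ⟨j, hj⟩ := h
    rw [mulVec_sub] at hj
    have hax := hxA j
    have hb := hbound j
    have habs := abs_le.mp hb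
    refine ⟨j, by simp only [Pi.sub_apply] at hj; linarith, hax, ?_⟩
    rintro ⟨lam, hlam⟩
    have h0 := aux_combo n m p A C y hy j lam hlam
    simp only [Pi.sub_apply] at hj
    linarith
end

section
/- Let Q be a symmetric n×n integer matrix, A an m×n integer matrix, b ∈ ℤ^m, C a p×n integer matrix, d ∈ ℤ^p, and let y ∈ ℤⁿ satisfy Cy = 0. Suppose x* ∈ ℤⁿ is an optimal solution (i.e. x* is feasible and (x*)^T Q x* ≤ z^T Q z for every feasible z), suppose x* + y and x* − y are both feasible, and suppose y^T Q is a linear combination of the rows of C, i.e. there is a vector λ with y^T Q = λ^T C. Then x* + y and x* − y are also optimal solutions. -/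
open Matrix

/-- if `x*` is an optimal solution of the IQP, `Cy = 0`, `x* ± y` are both
feasible, and `yᵀQ` is a linear combination of the rows of `C`, then `x* + y` and
`x* - y` are also optimal solutions. -/
theorem stmt_3 (n m p : ℕ)
    (Q : Matrix (Fin n) (Fin n) ℤ) (hQ : Q.IsSymm)
    (A : Matrix (Fin m) (Fin n) ℤ) (b : Fin m → ℤ)
    (C : Matrix (Fin p) (Fin n) ℤ) (d : Fin p → ℤ)
    (y : Fin n → ℤ) (hy : C.mulVec y = 0)
    (xs : Fin n → ℤ)
    (hfeas : A.mulVec xs ≤ b ∧ C.mulVec xs = d)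
    (hopt : ∀ z : Fin n → ℤ, A.mulVec z ≤ b → C.mulVec z = d →
      xs ⬝ᵥ Q.mulVec xs ≤ z ⬝ᵥ Q.mulVec z)
    (hplus : A.mulVec (xs + y) ≤ b ∧ C.mulVec (xs + y) = d)
    (hminus : A.mulVec (xs - y) ≤ b ∧ C.mulVec (xs - y) = d)
    (hdep : ∃ lam : Fin p → ℚ,
      ∀ i, ((Matrix.vecMul y Q) i : ℚ) = ∑ l, lam l * (C l i : ℚ)) :
    ((A.mulVec (xs + y) ≤ b ∧ C.mulVec (xs + y) = d) ∧
      ∀ z : Fin n → ℤ, A.mulVec z ≤ b → C.mulVec z = d →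
        (xs + y) ⬝ᵥ Q.mulVec (xs + y) ≤ z ⬝ᵥ Q.mulVec z) ∧
    ((A.mulVec (xs - y) ≤ b ∧ C.mulVec (xs - y) = d) ∧
      ∀ z : Fin n → ℤ, A.mulVec z ≤ b → C.mulVec z = d →
        (xs - y) ⬝ᵥ Q.mulVec (xs - y) ≤ z ⬝ᵥ Q.mulVec z) := by
  obtain ⟨lam, hlam⟩ := hdep
  have hQy : Matrix.vecMul y Q = Q.mulVec y := by
    rw [← Matrix.mulVec_transpose, hQ.eq]
  -- y ⬝ Q y = 0
  have hyy : y ⬝ᵥ Q.mulVec y = 0 := by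
    have : ((y ⬝ᵥ Q.mulVec y : ℤ) : ℚ) = 0 := by
      rw [Matrix.dotProduct_mulVec]
      push_cast [dotProduct]
      calc ∑ i, ((Matrix.vecMul y Q) i : ℚ) * (y i : ℚ)
          = ∑ i, (∑ l, lam l * (C l i : ℚ)) * (y i : ℚ) := by
            simp_rw [hlam]
        _ = ∑ l, lam l * ∑ i, (C l i : ℚ) * (y i : ℚ) := by
            simp_rw [Finset.sum_mul]
            rw [Finset.sum_comm]
            simp_rw [Finset.mul_sum, mul_assoc]
        _ = 0 := by
            have : ∀ l, (∑ i, (C l i : ℚ) * (y i : ℚ)) = 0 := by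
              intro l
              have := congrFun hy l
              simp only [Matrix.mulVec, dotProduct, Pi.zero_apply] at this
              have : ((∑ i, C l i * y i : ℤ) : ℚ) = 0 := by rw [this]; simp
              push_cast at this
              exact this
            simp [this]
    exact_mod_cast this
  have hsymm : ∀ u v : Fin n → ℤ, u ⬝ᵥ Q.mulVec v = v ⬝ᵥ Q.mulVec u := by
    intro u v
    rw [Matrix.dotProduct_mulVec, ← Matrix.mulVec_transpose, hQ.eq, dotProduct_comm]
  have hexp : ∀ s : ℤ, ∀ w : Fin n → ℤ,
      (xs + s • y) ⬝ᵥ Q.mulVec (xs + s • y)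
        = xs ⬝ᵥ Q.mulVec xs + 2 * s * (y ⬝ᵥ Q.mulVec xs) + s * s * (y ⬝ᵥ Q.mulVec y) := by
    intro s w
    rw [Matrix.mulVec_add, dotProduct_add, add_dotProduct,
      add_dotProduct, hsymm xs (s • y)]
    simp only [Matrix.mulVec_smul, smul_dotProduct, dotProduct_smul,
      smul_eq_mul]
    ring
  have hplusval : (xs + y) ⬝ᵥ Q.mulVec (xs + y)
      = xs ⬝ᵥ Q.mulVec xs + 2 * (y ⬝ᵥ Q.mulVec xs) := by
    have := hexp 1 y
    simpa [hyy] using this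
  have hminusval : (xs - y) ⬝ᵥ Q.mulVec (xs - y)
      = xs ⬝ᵥ Q.mulVec xs - 2 * (y ⬝ᵥ Q.mulVec xs) := by
    have := hexp (-1) y
    have h2 : xs + (-1 : ℤ) • y = xs - y := by
      funext i; simp [sub_eq_add_neg]
    rw [h2] at this
    rw [this, hyy]; ring
  have hge1 := hopt _ hplus.1 hplus.2
  have hge2 := hopt _ hminus.1 hminus.2
  have ht : y ⬝ᵥ Q.mulVec xs = 0 := by
    rw [hplusval] at hge1
    rw [hminusval] at hge2
    omega
  have hp0 : (xs + y) ⬝ᵥ Q.mulVec (xs + y) = xs ⬝ᵥ Q.mulVec xs := by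
    rw [hplusval, ht]; ring
  have hm0 : (xs - y) ⬝ᵥ Q.mulVec (xs - y) = xs ⬝ᵥ Q.mulVec xs := by
    rw [hminusval, ht]; ring
  exact ⟨⟨hplus, fun z h1 h2 => hp0 ▸ hopt z h1 h2⟩,
    ⟨hminus, fun z h1 h2 => hm0 ▸ hopt z h1 h2⟩⟩
end

section
/- Let Q be a symmetric n×n integer matrix, A an m×n integer matrix, b ∈ ℤ^m, C a p×n integer matrix, d ∈ ℤ^p, and let y_1, …, y_r ∈ ℤⁿ be integer vectors spanning the rational nullspace of C (in particular C·y_i = 0 for all i). Suppose that: the system has an optimal solution; every optimal solution x is deep, i.e. x + y_i and x − y_i are feasible for every i ∈ {1,…,r}; and for every i ∈ {1,…,r} the row vector y_i^T Q is a linear combination of the rows of C. Then for every optimal solution x* and every integer vector λ ∈ ℤ^r, the vector x* + λ_1 y_1 + ⋯ + λ_r y_r is also an optimal solution. -/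
open Matrix

/-- A feasible solution of the system `Ax ≤ b`, `Cx = d` over the integers. -/
def IsFeasible {n m p : ℕ} (A : Matrix (Fin m) (Fin n) ℤ) (b : Fin m → ℤ)
    (C : Matrix (Fin p) (Fin n) ℤ) (d : Fin p → ℤ) (x : Fin n → ℤ) : Prop :=
  A.mulVec x ≤ b ∧ C.mulVec x = d

/-- An optimal solution of the IQP: feasible and minimizing `xᵀQx` among feasible points. -/
def IsOptimal {n m p : ℕ} (Q : Matrix (Fin n) (Fin n) ℤ) (A : Matrix (Fin m) (Fin n) ℤ)
    (b : Fin m → ℤ) (C : Matrix (Fin p) (Fin n) ℤ) (d : Fin p → ℤ) (x : Fin n → ℤ) : Prop :=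
  IsFeasible A b C d x ∧
    ∀ z : Fin n → ℤ, IsFeasible A b C d z → x ⬝ᵥ Q.mulVec x ≤ z ⬝ᵥ Q.mulVec z

/-! Since `C yᵢ = 0` and `yᵢᵀQ` lies in the row space of `C`, the form vanishes on each direction:
`yᵢᵀQyᵢ = 0`. The parallelogram law `f(x + v) + f(x - v) = 2 f(x) + 2 f(v)` for `f(x) = xᵀQx` then
forces `f(x ± yᵢ) = f(x)` whenever `x` is optimal and `x ± yᵢ` are feasible; so deepness makes the
optimal set invariant under `± yᵢ`, hence under the whole lattice they generate. -/

theorem dotProduct_mulVec_add_add_dotProduct_mulVec_sub {ι R : Type*} [Fintype ι] [CommRing R]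
    (Q : Matrix ι ι R) (x v : ι → R) :
    (x + v) ⬝ᵥ Q *ᵥ (x + v) + (x - v) ⬝ᵥ Q *ᵥ (x - v) = 2 * (x ⬝ᵥ Q *ᵥ x) + 2 * (v ⬝ᵥ Q *ᵥ v) := by
  simp only [mulVec_add, mulVec_sub, add_dotProduct, sub_dotProduct, dotProduct_add,
    dotProduct_sub]
  ring

theorem dotProduct_mulVec_self_eq_zero_of_vecMul_mem_rowSpace {ι κ : Type*} [Fintype ι]
    [Fintype κ] (Q : Matrix ι ι ℤ) (C : Matrix κ ι ℤ) {v : ι → ℤ} (hv : C *ᵥ v = 0)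
    (hrow : ∃ lam : κ → ℚ, ∀ j, ((vecMul v Q) j : ℚ) = ∑ l, lam l * (C l j : ℚ)) :
    v ⬝ᵥ Q *ᵥ v = 0 := by
  obtain ⟨lam, hlam⟩ := hrow
  have hvecMul : (Int.cast ∘ vecMul v Q : ι → ℚ) = vecMul lam (C.map Int.cast) := by
    ext j
    rw [Function.comp_apply, hlam j]
    rfl
  have hmulVec : (C.map Int.cast : Matrix κ ι ℚ) *ᵥ (Int.cast ∘ v) = 0 := by
    ext l
    simpa [mulVec, dotProduct] using congrArg (fun w => ((w l : ℤ) : ℚ)) hv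
  suffices ((v ⬝ᵥ Q *ᵥ v : ℤ) : ℚ) = 0 by exact_mod_cast this
  calc ((v ⬝ᵥ Q *ᵥ v : ℤ) : ℚ) = (Int.cast ∘ vecMul v Q) ⬝ᵥ (Int.cast ∘ v) := by
        rw [dotProduct_mulVec]
        push_cast [dotProduct]
        rfl
    _ = lam ⬝ᵥ (C.map Int.cast : Matrix κ ι ℚ) *ᵥ (Int.cast ∘ v) := by
        rw [hvecMul, dotProduct_mulVec]
    _ = 0 := by rw [hmulVec, dotProduct_zero]

theorem IsOptimal.add_and_sub {n m p : ℕ} {Q : Matrix (Fin n) (Fin n) ℤ}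
    {A : Matrix (Fin m) (Fin n) ℤ} {b : Fin m → ℤ} {C : Matrix (Fin p) (Fin n) ℤ} {d : Fin p → ℤ}
    {x v : Fin n → ℤ} (hx : IsOptimal Q A b C d x) (hadd : IsFeasible A b C d (x + v))
    (hsub : IsFeasible A b C d (x - v)) (hv : v ⬝ᵥ Q *ᵥ v = 0) :
    IsOptimal Q A b C d (x + v) ∧ IsOptimal Q A b C d (x - v) := by
  have hpar := dotProduct_mulVec_add_add_dotProduct_mulVec_sub Q x v
  refine ⟨⟨hadd, fun z hz => ?_⟩, ⟨hsub, fun z hz => ?_⟩⟩ <;>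
    linarith [hx.2 z hz, hx.2 _ hadd, hx.2 _ hsub]

theorem add_zsmul_of_add_and_sub {G : Type*} [AddCommGroup G] {P : G → Prop} {v : G}
    (h : ∀ x, P x → P (x + v) ∧ P (x - v)) (k : ℤ) {x : G} (hx : P x) : P (x + k • v) := by
  induction k using Int.induction_on generalizing x with
  | zero => simpa using hx
  | succ k ih => simpa [add_smul, add_assoc] using (h _ (ih hx)).1
  | pred k ih =>
    rw [sub_smul, one_smul, ← add_sub_assoc]
    exact (h _ (ih hx)).2

theorem add_sum_zsmul_of_add_and_sub {G ι : Type*} [AddCommGroup G] {P : G → Prop} {y : ι → G}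
    (h : ∀ i x, P x → P (x + y i) ∧ P (x - y i)) (lam : ι → ℤ) (s : Finset ι) {x : G}
    (hx : P x) : P (x + ∑ i ∈ s, lam i • y i) := by
  classical
  induction s using Finset.induction_on with
  | empty => simpa using hx
  | insert a s ha ih =>
    rw [Finset.sum_insert ha, add_comm (lam a • y a), ← add_assoc]
    exact add_zsmul_of_add_and_sub (h a) (lam a) ih

theorem stmt_4_general (n m p r : ℕ)
    (Q : Matrix (Fin n) (Fin n) ℤ)
    (A : Matrix (Fin m) (Fin n) ℤ) (b : Fin m → ℤ)
    (C : Matrix (Fin p) (Fin n) ℤ) (d : Fin p → ℤ)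
    (y : Fin r → Fin n → ℤ)
    (hy0 : ∀ i, C.mulVec (y i) = 0)
    (hdeep : ∀ x : Fin n → ℤ, IsOptimal Q A b C d x →
      ∀ i, IsFeasible A b C d (x + y i) ∧ IsFeasible A b C d (x - y i))
    (hdep : ∀ i, ∃ lam : Fin p → ℚ,
      ∀ j, ((Matrix.vecMul (y i) Q) j : ℚ) = ∑ l, lam l * (C l j : ℚ))
    (xs : Fin n → ℤ) (hxs : IsOptimal Q A b C d xs) (lam : Fin r → ℤ) :
    IsOptimal Q A b C d (xs + ∑ i, lam i • y i) := by
  have hstep : ∀ i x, IsOptimal Q A b C d x →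
      IsOptimal Q A b C d (x + y i) ∧ IsOptimal Q A b C d (x - y i) := fun i x hx =>
    hx.add_and_sub (hdeep x hx i).1 (hdeep x hx i).2
      (dotProduct_mulVec_self_eq_zero_of_vecMul_mem_rowSpace Q C (hy0 i) (hdep i))
  exact add_sum_zsmul_of_add_and_sub hstep lam Finset.univ hxs

/-- if the IQP has an optimal solution, every optimal solution is deep with
respect to integer vectors `y_1, …, y_r` spanning the rational nullspace of `C`, and each
`y_iᵀQ` is a linear combination of the rows of `C`, then for every optimal `x*` and every
integer vector `λ`, `x* + Σ λ_i y_i` is also optimal. -/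
theorem stmt_4 (n m p r : ℕ)
    (Q : Matrix (Fin n) (Fin n) ℤ) (hQ : Q.IsSymm)
    (A : Matrix (Fin m) (Fin n) ℤ) (b : Fin m → ℤ)
    (C : Matrix (Fin p) (Fin n) ℤ) (d : Fin p → ℤ)
    (y : Fin r → Fin n → ℤ)
    (hy0 : ∀ i, C.mulVec (y i) = 0)
    (hspan : ∀ v : Fin n → ℚ, (C.map ((↑) : ℤ → ℚ)).mulVec v = 0 →
      v ∈ Submodule.span ℚ (Set.range fun i => fun j => ((y i j : ℤ) : ℚ)))
    (hex : ∃ x : Fin n → ℤ, IsOptimal Q A b C d x)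
    (hdeep : ∀ x : Fin n → ℤ, IsOptimal Q A b C d x →
      ∀ i, IsFeasible A b C d (x + y i) ∧ IsFeasible A b C d (x - y i))
    (hdep : ∀ i, ∃ lam : Fin p → ℚ,
      ∀ j, ((Matrix.vecMul (y i) Q) j : ℚ) = ∑ l, lam l * (C l j : ℚ))
    (xs : Fin n → ℤ) (hxs : IsOptimal Q A b C d xs) (lam : Fin r → ℤ) :
    IsOptimal Q A b C d (xs + ∑ i, lam i • y i) :=
  stmt_4_general n m p r Q A b C d y hy0 hdeep hdep xs hxs lam
end

section
/- Let C be a p×n integer matrix whose rows are linearly independent over ℚ, with p ≤ n, and let Δ ≥ 1 be an integer such that the determinant of every square submatrix of C has absolute value at most Δ. Then there exist integer vectors y_1, …, y_{n−p} ∈ ℤⁿ which are linearly independent over ℚ, satisfy C·y_i = 0 for every i, and satisfy ‖y_i‖∞ ≤ Δ² for every i; in particular they form a basis of the rational nullspace of C. -/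
/-!
Choose `p` columns `γ` of `C` whose square block `M` is nonsingular. For each of the `n - p`
other columns `j`, Cramer's rule solves `M x = det M • Cⱼ` over `ℤ`, and
`yⱼ = det M • eⱼ - Σₖ xₖ e_{γ k}` lies in the kernel of `C`. Every entry of `yⱼ` is `0`, `det M`,
or minus the minor obtained from `M` by replacing one of its columns with `Cⱼ`, so
`‖yⱼ‖∞ ≤ Δ ≤ Δ²`. On the coordinates outside `γ` the `yⱼ` form `det M` times the identity
matrix, hence they are linearly independent.
-/

open Matrix

namespace Matrix

variable {m n R : Type*} [Fintype m] [DecidableEq m]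

theorem injective_of_det_submatrix_ne_zero [CommRing R] {A : Matrix m n R} {γ : m → n}
    (h : (A.submatrix id γ).det ≠ 0) : Function.Injective γ := by
  intro k k' hkk'
  by_contra hne
  exact h (det_zero_of_column_eq hne fun l => by simp [hkk'])

theorem exists_submatrix_det_ne_zero_of_linearIndependent_rows [Fintype n] [Field R]
    {A : Matrix m n R} (h : LinearIndependent R A) :
    ∃ γ : m → n, (A.submatrix id γ).det ≠ 0 := by
  obtain ⟨κ, a, -, hspan, hli⟩ := exists_linearIndependent' R Aᵀ
  have hcols : Submodule.span R (Set.range (Aᵀ ∘ a)) = ⊤ := by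
    refine hspan.trans (Submodule.eq_top_of_finrank_eq ?_)
    rw [show Set.range Aᵀ = Set.range A.col from rfl, ← A.rank_eq_finrank_span_cols,
      h.rank_matrix, Module.finrank_fintype_fun_eq_card]
  let e : m ≃ κ := (Pi.basisFun R m).indexEquiv (Module.Basis.mk hli hcols.ge)
  refine ⟨a ∘ e, ?_⟩
  rw [← isUnit_iff_ne_zero, ← isUnit_iff_isUnit_det, ← linearIndependent_cols_iff_isUnit]
  exact hli.comp e e.injective

variable [DecidableEq n] [CommRing R]

def cramerKernelVec (C : Matrix m n R) (γ : m → n) (j : n) : n → R :=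
  (C.submatrix id γ).det • Pi.single j 1 -
    ∑ k, Pi.single (γ k) ((C.submatrix id γ).cramer (Cᵀ j) k)

theorem mulVec_cramerKernelVec [Fintype n] (C : Matrix m n R) (γ : m → n) (j : n) :
    C *ᵥ cramerKernelVec C γ j = 0 := by
  ext l
  have hl := congrFun (mulVec_cramer (C.submatrix id γ) (Cᵀ j)) l
  simp only [mulVec, dotProduct, submatrix_apply, id, Pi.smul_apply, transpose_apply,
    smul_eq_mul] at hl
  simp only [cramerKernelVec, mulVec_sub, mulVec_smul, mulVec_sum, mulVec_single,
    Pi.sub_apply, Pi.smul_apply, Finset.sum_apply, smul_eq_mul, op_smul_eq_mul, mul_one, col_apply,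
    Pi.zero_apply]
  rw [hl, sub_self]

theorem cramerKernelVec_apply_self (C : Matrix m n R) {γ : m → n} {j : n}
    (hj : j ∉ Set.range γ) : cramerKernelVec C γ j j = (C.submatrix id γ).det := by
  have hγj : ∀ k, γ k ≠ j := fun k hk => hj ⟨k, hk⟩
  simp [cramerKernelVec, Finset.sum_apply, hγj]

theorem cramerKernelVec_apply_of_ne (C : Matrix m n R) {γ : m → n} {j t : n} (htj : t ≠ j)
    (ht : t ∉ Set.range γ) : cramerKernelVec C γ j t = 0 := by
  have hγt : ∀ k, γ k ≠ t := fun k hk => ht ⟨k, hk⟩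
  simp [cramerKernelVec, Finset.sum_apply, hγt, htj]

theorem cramerKernelVec_apply_apply (C : Matrix m n R) {γ : m → n} (hγ : Function.Injective γ)
    {j : n} (hj : j ∉ Set.range γ) (k : m) :
    cramerKernelVec C γ j (γ k) = -(C.submatrix id (Function.update γ k j)).det := by
  have hγj : γ k ≠ j := fun hk => hj ⟨k, hk⟩
  have hupdate :
      (C.submatrix id γ).updateCol k (Cᵀ j) = C.submatrix id (Function.update γ k j) := by
    ext l k'
    by_cases hk' : k' = k <;> simp [hk']
  simp [cramerKernelVec, Finset.sum_apply, Pi.single_apply, hγj, hγ.eq_iff, cramer_apply, hupdate]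

theorem abs_cramerKernelVec_le [LinearOrder R] [IsOrderedRing R]
    (C : Matrix m n R) {γ : m → n} (hγ : Function.Injective γ) {j : n} (hj : j ∉ Set.range γ)
    {Δ : R} (hΔ : ∀ τ : m → n, |(C.submatrix id τ).det| ≤ Δ) (t : n) :
    |cramerKernelVec C γ j t| ≤ Δ := by
  by_cases htj : t = j
  · rw [htj, cramerKernelVec_apply_self C hj]
    exact hΔ γ
  by_cases ht : t ∈ Set.range γ
  · obtain ⟨k, rfl⟩ := ht
    rw [cramerKernelVec_apply_apply C hγ hj, abs_neg]
    exact hΔ _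
  · rw [cramerKernelVec_apply_of_ne C htj ht, abs_zero]
    exact (abs_nonneg _).trans (hΔ γ)

end Matrix

theorem linearIndependent_of_comp_eq_single {ι n R : Type*} [DecidableEq ι] [Ring R] [IsDomain R]
    {w : ι → n → R} (δ : ι → n) {d : ι → R} (hd : ∀ i, d i ≠ 0)
    (hw : ∀ i, w i ∘ δ = Pi.single i (d i)) : LinearIndependent R w := by
  refine LinearIndependent.of_comp (LinearMap.funLeft R R δ) ?_
  rw [show LinearMap.funLeft R R δ ∘ w = fun i => Pi.single i (d i) from funext hw]
  exact Pi.linearIndependent_single_of_ne_zero hd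

theorem Function.Injective.exists_injective_fin_sub_notMem_range {p n : ℕ} {γ : Fin p → Fin n}
    (hγ : Function.Injective γ) :
    ∃ δ : Fin (n - p) → Fin n, Function.Injective δ ∧ ∀ i, δ i ∉ Set.range γ := by
  classical
  have hcard : (Set.range γ)ᶜ.toFinset.card = n - p := by
    simp [Set.toFinset_compl, Finset.card_compl, Set.toFinset_range,
      Finset.card_image_of_injective _ hγ]
  let e := (Set.range γ)ᶜ.toFinset.equivFinOfCardEq hcard
  refine ⟨fun i => e.symm i, fun i i' h => e.symm.injective (Subtype.ext h), fun i => ?_⟩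
  simpa using (e.symm i).2

theorem stmt_6_general (n p : ℕ) (Δ : ℕ)
    (C : Matrix (Fin p) (Fin n) ℤ)
    (hrows : LinearIndependent ℚ (fun l => fun i => ((C l i : ℤ) : ℚ)))
    (hdet : ∀ (k : ℕ) (ρ : Fin k → Fin p) (γ : Fin k → Fin n),
      |(C.submatrix ρ γ).det| ≤ (Δ : ℤ)) :
    ∃ y : Fin (n - p) → Fin n → ℤ,
      LinearIndependent ℚ (fun i => fun j => ((y i j : ℤ) : ℚ)) ∧
      (∀ i, C.mulVec (y i) = 0) ∧
      (∀ i j, |y i j| ≤ (Δ : ℤ) ^ 2) := by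
  obtain ⟨γ, hγQ⟩ := exists_submatrix_det_ne_zero_of_linearIndependent_rows
    (A := C.map (Int.cast : ℤ → ℚ)) hrows
  have hγ : ((C.submatrix id γ).det : ℚ) ≠ 0 := by
    rwa [← eq_intCast (Int.castRingHom ℚ), RingHom.map_det, RingHom.mapMatrix_apply,
      ← submatrix_map]
  have hγinj : Function.Injective γ := injective_of_det_submatrix_ne_zero hγQ
  obtain ⟨δ, hδinj, hδ⟩ := hγinj.exists_injective_fin_sub_notMem_range
  refine ⟨fun i => cramerKernelVec C γ (δ i), ?_, fun i => mulVec_cramerKernelVec C γ (δ i),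
    fun i t => ?_⟩
  · refine linearIndependent_of_comp_eq_single δ (fun _ => hγ) fun i => funext fun i' => ?_
    by_cases hi : i' = i
    · simp [hi, cramerKernelVec_apply_self C (hδ i)]
    · simp [hi, cramerKernelVec_apply_of_ne C (hδinj.ne hi) (hδ i')]
  · calc |cramerKernelVec C γ (δ i) t|
        ≤ Δ := abs_cramerKernelVec_le C hγinj (hδ i) (hdet p id) t
      _ ≤ (Δ : ℤ) ^ 2 := by exact_mod_cast Nat.le_self_pow two_ne_zero Δ

/-- a `p × n` integer matrix `C` with ℚ-linearly independent rows and all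
square-submatrix determinants of absolute value at most `Δ` admits `n - p` ℚ-linearly
independent integer vectors in its nullspace, each with `ℓ∞`-norm at most `Δ²`
(hence a basis of the rational nullspace of `C`). -/
theorem stmt_6 (n p : ℕ) (hpn : p ≤ n) (Δ : ℕ) (hΔ : 1 ≤ Δ)
    (C : Matrix (Fin p) (Fin n) ℤ)
    (hrows : LinearIndependent ℚ (fun l => fun i => ((C l i : ℤ) : ℚ)))
    (hdet : ∀ (k : ℕ) (ρ : Fin k → Fin p) (γ : Fin k → Fin n),
      |(C.submatrix ρ γ).det| ≤ (Δ : ℤ)) :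
    ∃ y : Fin (n - p) → Fin n → ℤ,
      LinearIndependent ℚ (fun i => fun j => ((y i j : ℤ) : ℚ)) ∧
      (∀ i, C.mulVec (y i) = 0) ∧
      (∀ i j, |y i j| ≤ (Δ : ℤ) ^ 2) :=
  stmt_6_general n p Δ C hrows hdet
end

section
/- Let G be a finite simple graph with vertex set V of size n and let C ⊆ V be a vertex cover of G. Then there exists an optimal linear arrangement σ of G (a bijection σ : V → {1,…,n} minimizing val(σ,G) = Σ_{uv ∈ E(G)} |σ(u) − σ(v)| over all bijections) that is homogeneous with respect to C. -/
/-!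
Take an optimal arrangement `σ` which, among all optimal ones, minimises
`∑ x, σ x * ℓ (N x)` for an injective labelling `ℓ` of neighbourhoods. Between two vertices
`u, w` of the same type in the same gap no cover vertex is placed, so the vertices placed in
`[σ u, σ w]` are pairwise non-adjacent and all their neighbours are placed outside that block.
Swapping two consecutive vertices `x, y` of the block changes the cost by `β (N x) - β (N y)`,
where `β S` is the number of elements of `S` placed left of the block minus the number placed
right of it. Optimality makes `β ∘ N` antitone along the block, and `N u = N w` makes it
constant, so every such swap is cost-neutral. The tie-breaker then makes `ℓ ∘ N` antitone along
the block, hence constant, and `ℓ` is injective.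
-/

open Finset

/-- The cost `val(σ, G) = Σ_{uv ∈ E(G)} |σ(u) - σ(v)|` of a linear arrangement `σ`. -/
def arrCost {V : Type*} [Fintype V] [DecidableEq V] (G : SimpleGraph V)
    [DecidableRel G.Adj] (σ : V ≃ Fin (Fintype.card V)) : ℤ :=
  ∑ e ∈ G.edgeFinset,
    Sym2.lift ⟨fun u v => |((σ u : ℕ) : ℤ) - ((σ v : ℕ) : ℤ)|,
      fun u v => by dsimp only; rw [abs_sub_comm]⟩ e

/-- `σ` is homogeneous with respect to a vertex cover `C`: whenever `u, v, w ∉ C` satisfy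
`σ u < σ v < σ w`, `u` and `w` have the same type (neighborhood) and lie in the same gap
(no vertex of `C` is placed strictly between them), then `v` also has that type. -/
def Homogeneous {V : Type*} [Fintype V] (G : SimpleGraph V) (C : Set V)
    (σ : V ≃ Fin (Fintype.card V)) : Prop :=
  ∀ u v w : V, u ∉ C → v ∉ C → w ∉ C → σ u < σ v → σ v < σ w →
    G.neighborSet u = G.neighborSet w →
    (∀ c ∈ C, ¬ (σ u < σ c ∧ σ c < σ w)) →
    G.neighborSet v = G.neighborSet u

lemma AntitoneOn.eq_left_of_mem_Icc {α β : Type*} [Preorder α] [PartialOrder β] {f : α → β}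
    {a b x : α} (hf : AntitoneOn f (Set.Icc a b)) (hab : f a = f b) (hx : x ∈ Set.Icc a b) :
    f x = f a :=
  le_antisymm (hf ⟨le_rfl, hx.1.trans hx.2⟩ hx hx.1)
    (hab ▸ hf hx ⟨hx.1.trans hx.2, le_rfl⟩ hx.2)

lemma Finite.exists_lex_min {α β γ : Type*} [Finite α] [Nonempty α] [LinearOrder β]
    [LinearOrder γ] (f : α → β) (g : α → γ) :
    ∃ a, (∀ b, f a ≤ f b) ∧ ∀ b, f b = f a → g a ≤ g b := by
  obtain ⟨a₀, ha₀⟩ := Finite.exists_min f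
  have : Nonempty {b // f b = f a₀} := ⟨⟨a₀, rfl⟩⟩
  obtain ⟨⟨a, ha⟩, hmin⟩ := Finite.exists_min fun b : {b // f b = f a₀} => g b
  exact ⟨a, fun b => ha ▸ ha₀ b, fun b hb => hmin ⟨b, hb.trans ha⟩⟩

lemma abs_add_one_sub_sub_abs_sub {x z lo hi : ℤ} (hlo : lo ≤ x) (hhi : x + 1 ≤ hi)
    (hz : z < lo ∨ hi < z) :
    |x + 1 - z| - |x - z| = if z < lo then 1 else -1 := by
  rcases hz with hz | hz
  · rw [if_pos hz, abs_of_pos (by omega), abs_of_pos (by omega)]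
    ring
  · rw [if_neg (by omega), abs_of_neg (by omega), abs_of_neg (by omega)]
    ring

lemma Fintype.sum_comp_swap_mul_sub {V : Type*} [Fintype V] [DecidableEq V] (p w : V → ℤ)
    {a b : V} (hab : a ≠ b) :
    ∑ x, p (Equiv.swap a b x) * w x - ∑ x, p x * w x = (p b - p a) * (w a - w b) := by
  rw [← sum_sub_distrib, Fintype.sum_eq_add a b hab fun x hx => by
    rw [Equiv.swap_apply_of_ne_of_ne hx.1 hx.2, sub_self], Equiv.swap_apply_left,
    Equiv.swap_apply_right]
  ring

namespace LinearArrangement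

variable {V : Type*} [Fintype V]

def position (σ : V ≃ Fin (Fintype.card V)) (x : V) : ℤ := ((σ x : ℕ) : ℤ)

lemma position_symm_succ (σ : V ≃ Fin (Fintype.card V)) {i : Fin (Fintype.card V)}
    (hmax : ¬ IsMax i) :
    position σ (σ.symm (Order.succ i)) = position σ (σ.symm i) + 1 := by
  have := Nat.covBy_iff_add_one_eq.mp (Fin.covBy_iff.mp (Order.covBy_succ_of_not_isMax hmax))
  simp [position, ← this]

section LengthSum

variable [DecidableEq V] (G : SimpleGraph V) [DecidableRel G.Adj]

def lengthSum (p : V → ℤ) : ℤ :=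
  ∑ e ∈ G.edgeFinset, Sym2.lift ⟨fun u v => |p u - p v|, fun _ _ => abs_sub_comm _ _⟩ e

lemma arrCost_eq_lengthSum (σ : V ≃ Fin (Fintype.card V)) :
    arrCost G σ = lengthSum G (position σ) := rfl

lemma sum_incidenceFinset_eq_sum_neighborFinset {M : Type*} [AddCommMonoid M]
    (a : V) (f : Sym2 V → M) :
    ∑ e ∈ G.incidenceFinset a, f e = ∑ c ∈ G.neighborFinset a, f s(a, c) := by
  have : G.incidenceFinset a = (G.neighborFinset a).image (fun c => s(a, c)) := by
    ext e
    induction e using Sym2.ind with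
    | _ x y =>
      simp only [SimpleGraph.mem_incidenceFinset, SimpleGraph.mk'_mem_incidenceSet_iff, mem_image,
        SimpleGraph.mem_neighborFinset, Sym2.eq_iff]
      grind [SimpleGraph.Adj.symm]
  rw [this, sum_image fun _ _ _ _ => Sym2.congr_right.mp]

lemma lengthSum_update (p : V → ℤ) (a : V) (t : ℤ) :
    lengthSum G (Function.update p a t)
      = lengthSum G p + ∑ c ∈ G.neighborFinset a, (|t - p c| - |p a - p c|) := by
  simp only [lengthSum, ← sum_filter_add_sum_filter_not G.edgeFinset (a ∈ ·),
    ← G.incidenceFinset_eq_filter, sum_incidenceFinset_eq_sum_neighborFinset]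
  have hfar : ∀ e ∈ G.edgeFinset.filter (a ∉ ·),
      Sym2.lift ⟨fun u v => |Function.update p a t u - Function.update p a t v|,
        fun _ _ => abs_sub_comm _ _⟩ e
      = Sym2.lift ⟨fun u v => |p u - p v|, fun _ _ => abs_sub_comm _ _⟩ e := by
    intro e he
    induction e using Sym2.ind with
    | _ x y =>
      simp only [mem_filter, Sym2.mem_iff, not_or] at he
      simp [Function.update_of_ne (Ne.symm he.2.1), Function.update_of_ne (Ne.symm he.2.2)]
  have hnear : ∀ c ∈ G.neighborFinset a,
      |Function.update p a t a - Function.update p a t c| = |t - p c| := by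
    intro c hc
    rw [Function.update_self, Function.update_of_ne ((G.mem_neighborFinset a c).mp hc).ne']
  simp only [Sym2.lift_mk]
  rw [sum_congr rfl hfar, sum_congr rfl hnear, sum_sub_distrib]
  ring

lemma lengthSum_comp_swap (p : V → ℤ) {a b : V} (hab : a ≠ b) (hnadj : ¬ G.Adj a b) :
    lengthSum G (p ∘ Equiv.swap a b)
      = lengthSum G p + ∑ c ∈ G.neighborFinset a, (|p b - p c| - |p a - p c|)
          + ∑ c ∈ G.neighborFinset b, (|p a - p c| - |p b - p c|) := by
  have hfix : ∑ c ∈ G.neighborFinset a,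
      (|p b - Function.update p b (p a) c| - |p a - Function.update p b (p a) c|)
      = ∑ c ∈ G.neighborFinset a, (|p b - p c| - |p a - p c|) := by
    refine sum_congr rfl fun c hc => ?_
    rw [Function.update_of_ne]
    rintro rfl
    exact hnadj ((G.mem_neighborFinset a _).mp hc)
  rw [Equiv.comp_swap_eq_update, lengthSum_update, lengthSum_update, Function.update_of_ne hab,
    hfix]
  ring

def balance (p : V → ℤ) (lo : ℤ) (S : Finset V) : ℤ :=
  ∑ c ∈ S, if p c < lo then 1 else -1

lemma lengthSum_comp_swap_of_consecutive (p : V → ℤ) {a b : V} {lo hi : ℤ}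
    (hab : p b = p a + 1) (hlo : lo ≤ p a) (hhi : p b ≤ hi) (hnadj : ¬ G.Adj a b)
    (hnbr : ∀ x ∈ ({a, b} : Finset V), ∀ c ∈ G.neighborFinset x, p c < lo ∨ hi < p c) :
    lengthSum G (p ∘ Equiv.swap a b)
      = lengthSum G p
          + (balance p lo (G.neighborFinset a) - balance p lo (G.neighborFinset b)) := by
  have hne : a ≠ b := fun h => by rw [h] at hab; omega
  rw [lengthSum_comp_swap G p hne hnadj, balance, balance, add_assoc, sub_eq_add_neg,
    ← sum_neg_distrib]
  congr 2
  · refine sum_congr rfl fun c hc => ?_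
    rw [hab]
    exact abs_add_one_sub_sub_abs_sub hlo (hab ▸ hhi) (hnbr a (by simp) c hc)
  · refine sum_congr rfl fun c hc => ?_
    rw [hab, ← abs_add_one_sub_sub_abs_sub hlo (hab ▸ hhi) (hnbr b (by simp) c hc)]
    ring

end LengthSum

section Arrangement

variable {G : SimpleGraph V} [DecidableRel G.Adj] {σ : V ≃ Fin (Fintype.card V)}

variable (G) in
def typeMoment (label : Finset V → ℤ) (σ : V ≃ Fin (Fintype.card V)) : ℤ :=
  ∑ x, position σ x * label (G.neighborFinset x)

variable (G σ) in
def IsolatedBlock (lo hi : Fin (Fintype.card V)) : Prop :=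
  ∀ x, σ x ∈ Set.Icc lo hi → ∀ c ∈ G.neighborFinset x, σ c ∉ Set.Icc lo hi

lemma isolatedBlock_of_isVertexCover {C : Set V} (hC : G.IsVertexCover C) {u w : V}
    (hu : u ∉ C) (hw : w ∉ C) (hgap : ∀ c ∈ C, ¬ (σ u < σ c ∧ σ c < σ w)) :
    IsolatedBlock G σ (σ u) (σ w) := by
  have hblockC : ∀ x, σ x ∈ Set.Icc (σ u) (σ w) → x ∉ C := by
    intro x hx hxC
    rcases hx.1.eq_or_lt with hxu | hxu
    · exact hu (σ.injective hxu ▸ hxC)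
    rcases hx.2.eq_or_lt with hxw | hxw
    · exact hw (σ.injective hxw ▸ hxC)
    exact hgap x hxC ⟨hxu, hxw⟩
  intro x hx c hc hcx
  exact (hC ((G.mem_neighborFinset x c).mp hc)).elim (hblockC x hx) (hblockC c hcx)

variable [DecidableEq V] {lo hi : Fin (Fintype.card V)}

lemma typeMoment_swap_trans_sub (label : Finset V → ℤ) {a b : V} (hab : a ≠ b) :
    typeMoment G label ((Equiv.swap a b).trans σ) - typeMoment G label σ
      = (position σ b - position σ a)
          * (label (G.neighborFinset a) - label (G.neighborFinset b)) :=
  Fintype.sum_comp_swap_mul_sub (position σ) (fun x => label (G.neighborFinset x)) hab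

lemma arrCost_swap_succ (hblock : IsolatedBlock G σ lo hi) {i : Fin (Fintype.card V)}
    (hmax : ¬ IsMax i) (hmem : i ∈ Set.Icc lo hi) (hsucc : Order.succ i ∈ Set.Icc lo hi) :
    arrCost G ((Equiv.swap (σ.symm i) (σ.symm (Order.succ i))).trans σ)
      = arrCost G σ + (balance (position σ) lo (G.neighborFinset (σ.symm i))
          - balance (position σ) lo (G.neighborFinset (σ.symm (Order.succ i)))) := by
  have hnbr : ∀ x ∈ ({σ.symm i, σ.symm (Order.succ i)} : Finset V),
      ∀ c ∈ G.neighborFinset x,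
        position σ c < (lo : ℕ) ∨ ((hi : ℕ) : ℤ) < position σ c := by
    intro x hx c hc
    have hxi : σ x ∈ Set.Icc lo hi := by
      rcases mem_insert.mp hx with rfl | hx
      · simpa using hmem
      · rw [mem_singleton.mp hx]; simpa using hsucc
    have := hblock x hxi c hc
    simp only [Set.mem_Icc, not_and_or, not_le, Fin.lt_def] at this
    simp only [position]
    omega
  rw [arrCost_eq_lengthSum, arrCost_eq_lengthSum]
  refine lengthSum_comp_swap_of_consecutive G (position σ) (lo := (lo : ℕ)) (hi := (hi : ℕ))
    (position_symm_succ σ hmax) ?_ ?_ ?_ hnbr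
  · simpa [position] using hmem.1
  · simpa [position] using hsucc.2
  · intro hadj
    exact hblock _ (by simpa using hmem) _ ((G.mem_neighborFinset _ _).mpr hadj)
      (by simpa using hsucc)

lemma antitoneOn_balance (hopt : ∀ τ, arrCost G σ ≤ arrCost G τ)
    (hblock : IsolatedBlock G σ lo hi) :
    AntitoneOn (fun i => balance (position σ) lo (G.neighborFinset (σ.symm i)))
      (Set.Icc lo hi) :=
  antitoneOn_of_succ_le Set.ordConnected_Icc fun i hmax hmem hsucc => by
    have := hopt ((Equiv.swap (σ.symm i) (σ.symm (Order.succ i))).trans σ)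
    rw [arrCost_swap_succ hblock hmax hmem hsucc] at this
    linarith

lemma antitoneOn_label {label : Finset V → ℤ} (hopt : ∀ τ, arrCost G σ ≤ arrCost G τ)
    (htie : ∀ τ, arrCost G τ = arrCost G σ → typeMoment G label σ ≤ typeMoment G label τ)
    (hblock : IsolatedBlock G σ lo hi)
    (hends : G.neighborFinset (σ.symm lo) = G.neighborFinset (σ.symm hi)) :
    AntitoneOn (fun i => label (G.neighborFinset (σ.symm i))) (Set.Icc lo hi) :=
  antitoneOn_of_succ_le Set.ordConnected_Icc fun i hmax hmem hsucc => by
    have hbal : ∀ j ∈ Set.Icc lo hi, balance (position σ) lo (G.neighborFinset (σ.symm j))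
        = balance (position σ) lo (G.neighborFinset (σ.symm lo)) := fun j hj =>
      (antitoneOn_balance hopt hblock).eq_left_of_mem_Icc (by simp only [hends]) hj
    have hcost := arrCost_swap_succ hblock hmax hmem hsucc
    rw [hbal i hmem, hbal _ hsucc, sub_self, add_zero] at hcost
    have hne : σ.symm i ≠ σ.symm (Order.succ i) :=
      σ.symm.injective.ne (Order.lt_succ_of_not_isMax hmax).ne
    have := typeMoment_swap_trans_sub (G := G) (σ := σ) label hne
    rw [position_symm_succ σ hmax] at this
    linarith [htie _ hcost]

lemma neighborFinset_eq_of_isolatedBlock {label : Finset V → ℤ}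
    (hlabel : Function.Injective label) (hopt : ∀ τ, arrCost G σ ≤ arrCost G τ)
    (htie : ∀ τ, arrCost G τ = arrCost G σ → typeMoment G label σ ≤ typeMoment G label τ)
    {u v w : V} (hblock : IsolatedBlock G σ (σ u) (σ w))
    (hN : G.neighborFinset u = G.neighborFinset w) (hv : σ v ∈ Set.Icc (σ u) (σ w)) :
    G.neighborFinset v = G.neighborFinset u := by
  have hends : G.neighborFinset (σ.symm (σ u)) = G.neighborFinset (σ.symm (σ w)) := by
    rwa [σ.symm_apply_apply, σ.symm_apply_apply]
  have := (antitoneOn_label hopt htie hblock hends).eq_left_of_mem_Icc (congrArg label hends) hv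
  rw [← σ.symm_apply_apply v, ← σ.symm_apply_apply u]
  exact hlabel this

end Arrangement

end LinearArrangement

open LinearArrangement

/-- every graph with a vertex cover `C` has an optimal linear arrangement
that is homogeneous with respect to `C`. -/
theorem stmt_11 {V : Type*} [Fintype V] [DecidableEq V]
    (G : SimpleGraph V) [DecidableRel G.Adj]
    (C : Set V) (hC : ∀ u v : V, G.Adj u v → u ∈ C ∨ v ∈ C) :
    ∃ σ : V ≃ Fin (Fintype.card V),
      (∀ τ : V ≃ Fin (Fintype.card V), arrCost G σ ≤ arrCost G τ) ∧
      Homogeneous G C σ := by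
  obtain ⟨label, hlabel⟩ := exists_injective_nat (Finset V)
  have : Nonempty (V ≃ Fin (Fintype.card V)) := ⟨Fintype.equivFin V⟩
  obtain ⟨σ, hopt, htie⟩ :=
    Finite.exists_lex_min (arrCost G) (typeMoment G fun S => (label S : ℤ))
  refine ⟨σ, hopt, fun u v w hu _ hw huv hvw hN hgap => ?_⟩
  have hblock := isolatedBlock_of_isVertexCover (fun _ _ h => hC _ _ h) hu hw hgap
  have hNfin : G.neighborFinset u = G.neighborFinset w := by
    simpa only [← SimpleGraph.coe_neighborFinset, Finset.coe_inj] using hN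
  have := neighborFinset_eq_of_isolatedBlock (Nat.cast_injective.comp hlabel) hopt htie hblock
    hNfin ⟨huv.le, hvw.le⟩
  simpa using congrArg ((↑) : Finset V → Set V) this
end

section
/- Let G be a finite simple graph with vertex set V of size n and let C ⊆ V be a vertex cover of G. Then there exists an optimal linear arrangement σ of G (a bijection σ : V → {1,…,n} minimizing val(σ,G) = Σ_{uv ∈ E(G)} |σ(u) − σ(v)| over all bijections) that is super-homogeneous with respect to C, i.e. σ is homogeneous and for all u, w ∈ V ∖ C in the same gap with σ(u) < σ(w), the forces satisfy δ_σ(u) ≤ δ_σ(w). -/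
open Finset

/-- The force of a vertex `v` with respect to `σ`:
`δ_σ(v) = #{u ∈ N(v) : σ u > σ v} - #{u ∈ N(v) : σ u < σ v}`. -/
def force {V : Type*} [Fintype V] [DecidableEq V] (G : SimpleGraph V)
    [DecidableRel G.Adj] (σ : V ≃ Fin (Fintype.card V)) (v : V) : ℤ :=
  (((G.neighborFinset v).filter fun u => σ v < σ u).card : ℤ) -
    (((G.neighborFinset v).filter fun u => σ u < σ v).card : ℤ)

/-- `σ` is super-homogeneous with respect to `C`: homogeneous, and within every gap the
vertices outside `C` appear from left to right in non-decreasing order of force. -/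
def SuperHomogeneous {V : Type*} [Fintype V] [DecidableEq V] (G : SimpleGraph V)
    [DecidableRel G.Adj] (C : Set V) (σ : V ≃ Fin (Fintype.card V)) : Prop :=
  Homogeneous G C σ ∧
    ∀ u w : V, u ∉ C → w ∉ C → σ u < σ w →
      (∀ c ∈ C, ¬ (σ u < σ c ∧ σ c < σ w)) →
      force G σ u ≤ force G σ w

section Aux

open SimpleGraph

variable {V : Type*} [Fintype V] [DecidableEq V] (G : SimpleGraph V) [DecidableRel G.Adj]

def posn (σ : V ≃ Fin (Fintype.card V)) (v : V) : ℤ := ((σ v : ℕ) : ℤ)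

lemma posn_lt_iff (σ : V ≃ Fin (Fintype.card V)) {a b : V} :
    posn σ a < posn σ b ↔ σ a < σ b := by
  unfold posn; rw [Nat.cast_lt]; exact Iff.rfl

lemma posn_inj (σ : V ≃ Fin (Fintype.card V)) {a b : V} (h : posn σ a = posn σ b) : a = b :=
  σ.injective (Fin.ext (Nat.cast_injective h))

def dsum (σ : V ≃ Fin (Fintype.card V)) : ℤ :=
  ∑ v : V, ∑ c ∈ G.neighborFinset v, |posn σ v - posn σ c|

lemma two_mul_arrCost (σ : V ≃ Fin (Fintype.card V)) :
    2 * arrCost G σ = dsum G σ := by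
  classical
  set F : Sym2 V → ℤ := Sym2.lift ⟨fun u v => |posn σ u - posn σ v|,
    fun u v => by dsimp only; rw [abs_sub_comm]⟩ with hF
  have harr : arrCost G σ = ∑ e ∈ G.edgeFinset, F e := rfl
  have h1 : ∑ d : G.Dart, F d.edge = ∑ e ∈ G.edgeFinset, 2 * F e := by
    rw [← Finset.sum_fiberwise_of_maps_to (g := fun d : G.Dart => d.edge)
        (t := G.edgeFinset) (fun d _ => by simp [SimpleGraph.mem_edgeFinset, d.edge_mem])]
    refine Finset.sum_congr rfl fun e he => ?_
    rw [Finset.sum_congr rfl (fun d hd => by rw [(Finset.mem_filter.1 hd).2] :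
        ∀ d ∈ Finset.univ.filter (fun d : G.Dart => d.edge = e), F d.edge = F e),
      Finset.sum_const, G.dart_edge_fiber_card e (by simpa using he)]
    simp [two_mul]
  have h2 : ∑ d : G.Dart, F d.edge = dsum G σ := by
    rw [← Finset.sum_fiberwise_of_maps_to (g := fun d : G.Dart => d.fst)
        (t := (Finset.univ : Finset V)) (fun d _ => Finset.mem_univ _)]
    refine Finset.sum_congr rfl fun v _ => ?_
    rw [G.dart_fst_fiber v, Finset.sum_image (fun a _ b _ h => G.dartOfNeighborSet_injective v h)]
    rw [G.neighborFinset_def, ← Finset.sum_set_coe]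
    rfl
  rw [harr, Finset.mul_sum]
  rw [show (∑ e ∈ G.edgeFinset, 2 * F e) = ∑ d : G.Dart, F d.edge from h1.symm, h2]

lemma arrCost_swap (σ : V ≃ Fin (Fintype.card V)) {u w : V}
    (hAdj : ¬ G.Adj u w) (hlt : σ u < σ w)
    (H : ∀ c : V, G.Adj u c ∨ G.Adj w c → posn σ c < posn σ u ∨ posn σ w < posn σ c) :
    arrCost G ((Equiv.swap u w).trans σ)
      = arrCost G σ + (posn σ w - posn σ u) * (force G σ w - force G σ u) := by
  classical
  set τ := (Equiv.swap u w).trans σ with hτdef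
  set p := posn σ u with hp
  set q := posn σ w with hq
  have hpq : p < q := (posn_lt_iff σ).2 hlt
  have huw : u ≠ w := fun h => absurd hlt (by rw [h]; exact lt_irrefl _)
  have hτu : posn τ u = q := by rw [hq]; simp [hτdef, posn]
  have hτw : posn τ w = p := by rw [hp]; simp [hτdef, posn]
  have hτo : ∀ x : V, x ≠ u → x ≠ w → posn τ x = posn σ x := fun x h1 h2 => by
    simp [hτdef, posn, Equiv.swap_apply_of_ne_of_ne h1 h2]
  have hNu : ∀ c ∈ G.neighborFinset u, c ≠ u ∧ c ≠ w ∧ (posn σ c < p ∨ q < posn σ c) := by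
    intro c hc
    have hadj : G.Adj u c := (SimpleGraph.mem_neighborFinset _ _ _).1 hc
    exact ⟨fun h => G.irrefl (h ▸ hadj), fun h => hAdj (h ▸ hadj),
      H c (Or.inl hadj)⟩
  have hNw : ∀ c ∈ G.neighborFinset w, c ≠ u ∧ c ≠ w ∧ (posn σ c < p ∨ q < posn σ c) := by
    intro c hc
    have hadj : G.Adj w c := (SimpleGraph.mem_neighborFinset _ _ _).1 hc
    exact ⟨fun h => hAdj (h ▸ hadj).symm, fun h => G.irrefl (h ▸ hadj),
      H c (Or.inr hadj)⟩
  set SU : ℤ := ∑ c ∈ G.neighborFinset u, (|q - posn σ c| - |p - posn σ c|) with hSUdef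
  set SW : ℤ := ∑ c ∈ G.neighborFinset w, (|p - posn σ c| - |q - posn σ c|) with hSWdef
  -- SU = (q - p) * (- force u)
  have hSU : SU = (q - p) * (- force G σ u) := by
    have e1 : (G.neighborFinset u).filter (fun c => posn σ c < p)
        = (G.neighborFinset u).filter (fun c => σ c < σ u) :=
      Finset.filter_congr fun c _ => by rw [hp, posn_lt_iff]
    have e2 : (G.neighborFinset u).filter (fun c => ¬ posn σ c < p)
        = (G.neighborFinset u).filter (fun c => σ u < σ c) := by
      refine Finset.filter_congr fun c hc => ?_
      obtain ⟨-, -, hside⟩ := hNu c hc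
      constructor
      · intro h
        rcases hside with h' | h'
        · exact absurd h' h
        · exact (posn_lt_iff σ).1 (lt_trans hpq h')
      · intro h
        exact not_lt.2 (le_of_lt ((posn_lt_iff σ).2 h))
    have hL : ∑ c ∈ (G.neighborFinset u).filter (fun c => posn σ c < p),
        (|q - posn σ c| - |p - posn σ c|)
        = ((((G.neighborFinset u).filter (fun c => σ c < σ u)).card : ℤ)) * (q - p) := by
      rw [← e1]
      rw [Finset.sum_congr rfl (fun c hc => ?_), Finset.sum_const, nsmul_eq_mul]
      have h1 : posn σ c < p := (Finset.mem_filter.1 hc).2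
      rw [abs_of_pos (by linarith), abs_of_pos (by linarith)]
      ring
    have hR : ∑ c ∈ (G.neighborFinset u).filter (fun c => ¬ posn σ c < p),
        (|q - posn σ c| - |p - posn σ c|)
        = ((((G.neighborFinset u).filter (fun c => σ u < σ c)).card : ℤ)) * (p - q) := by
      rw [← e2]
      rw [Finset.sum_congr rfl (fun c hc => ?_), Finset.sum_const, nsmul_eq_mul]
      obtain ⟨hcm, h1⟩ := Finset.mem_filter.1 hc
      obtain ⟨-, -, hside⟩ := hNu c hcm
      have h2 : q < posn σ c := by rcases hside with h' | h'; exact absurd h' h1; exact h'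
      rw [abs_of_neg (by linarith), abs_of_neg (by linarith)]
      ring
    rw [hSUdef, ← Finset.sum_filter_add_sum_filter_not (G.neighborFinset u)
      (fun c => posn σ c < p), hL, hR, force]
    ring
  -- SW = (q - p) * force w
  have hSW : SW = (q - p) * (force G σ w) := by
    have e1 : (G.neighborFinset w).filter (fun c => posn σ c < p)
        = (G.neighborFinset w).filter (fun c => σ c < σ w) := by
      refine Finset.filter_congr fun c hc => ?_
      obtain ⟨-, -, hside⟩ := hNw c hc
      constructor
      · intro h; exact (posn_lt_iff σ).1 (lt_trans h hpq)
      · intro h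
        rcases hside with h' | h'
        · exact h'
        · exact absurd ((posn_lt_iff σ).2 h) (not_lt.2 (le_of_lt h'))
    have e2 : (G.neighborFinset w).filter (fun c => ¬ posn σ c < p)
        = (G.neighborFinset w).filter (fun c => σ w < σ c) := by
      refine Finset.filter_congr fun c hc => ?_
      obtain ⟨-, -, hside⟩ := hNw c hc
      constructor
      · intro h
        rcases hside with h' | h'
        · exact absurd h' h
        · exact (posn_lt_iff σ).1 h'
      · intro h
        have := (posn_lt_iff σ).2 h
        intro h'; linarith
    have hL : ∑ c ∈ (G.neighborFinset w).filter (fun c => posn σ c < p),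
        (|p - posn σ c| - |q - posn σ c|)
        = ((((G.neighborFinset w).filter (fun c => σ c < σ w)).card : ℤ)) * (p - q) := by
      rw [← e1]
      rw [Finset.sum_congr rfl (fun c hc => ?_), Finset.sum_const, nsmul_eq_mul]
      have h1 : posn σ c < p := (Finset.mem_filter.1 hc).2
      rw [abs_of_pos (by linarith), abs_of_pos (by linarith)]
      ring
    have hR : ∑ c ∈ (G.neighborFinset w).filter (fun c => ¬ posn σ c < p),
        (|p - posn σ c| - |q - posn σ c|)
        = ((((G.neighborFinset w).filter (fun c => σ w < σ c)).card : ℤ)) * (q - p) := by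
      rw [← e2]
      rw [Finset.sum_congr rfl (fun c hc => ?_), Finset.sum_const, nsmul_eq_mul]
      obtain ⟨hcm, h1⟩ := Finset.mem_filter.1 hc
      obtain ⟨-, -, hside⟩ := hNw c hcm
      have h2 : q < posn σ c := by
        rcases hside with h' | h'
        · exact absurd h' h1
        · exact h'
      rw [abs_of_neg (by linarith), abs_of_neg (by linarith)]
      ring
    rw [hSWdef, ← Finset.sum_filter_add_sum_filter_not (G.neighborFinset w)
      (fun c => posn σ c < p), hL, hR, force]
    ring
  -- pointwise decomposition of the change in dsum
  have key : ∀ v : V,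
      ((∑ c ∈ G.neighborFinset v, |posn τ v - posn τ c|)
        - ∑ c ∈ G.neighborFinset v, |posn σ v - posn σ c|)
      = (if v = u then SU else 0) + (if v = w then SW else 0)
        + ((if u ∈ G.neighborFinset v then |posn σ v - q| - |posn σ v - p| else 0)
          + (if w ∈ G.neighborFinset v then |posn σ v - p| - |posn σ v - q| else 0)) := by
    intro v
    by_cases hvu : v = u
    · subst hvu
      rw [if_pos rfl, if_neg huw,
        if_neg (fun h => G.irrefl ((SimpleGraph.mem_neighborFinset _ _ _).1 h)),
        if_neg (fun h => hAdj ((SimpleGraph.mem_neighborFinset _ _ _).1 h))]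
      rw [add_zero, add_zero, add_zero, hSUdef, ← Finset.sum_sub_distrib]
      refine Finset.sum_congr rfl fun c hc => ?_
      obtain ⟨hcu, hcw, -⟩ := hNu c hc
      rw [hτu, hτo c hcu hcw, ← hp]
    · by_cases hvw : v = w
      · subst hvw
        rw [if_neg hvu, if_pos rfl,
          if_neg (fun h => hAdj ((SimpleGraph.mem_neighborFinset _ _ _).1 h).symm),
          if_neg (fun h => G.irrefl ((SimpleGraph.mem_neighborFinset _ _ _).1 h))]
        rw [zero_add, add_zero, add_zero, hSWdef, ← Finset.sum_sub_distrib]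
        refine Finset.sum_congr rfl fun c hc => ?_
        obtain ⟨hcu, hcw, -⟩ := hNw c hc
        rw [hτw, hτo c hcu hcw, ← hq]
      · rw [if_neg hvu, if_neg hvw, zero_add, zero_add, ← Finset.sum_sub_distrib]
        have hterm : ∀ c ∈ G.neighborFinset v,
            (|posn τ v - posn τ c| - |posn σ v - posn σ c|)
            = (if c = u then |posn σ v - q| - |posn σ v - p| else 0)
              + (if c = w then |posn σ v - p| - |posn σ v - q| else 0) := by
          intro c hc
          rw [hτo v hvu hvw]
          by_cases hcu : c = u
          · subst hcu
            rw [if_pos rfl, if_neg huw, add_zero, hτu, ← hp]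
          · by_cases hcw : c = w
            · subst hcw
              rw [if_neg hcu, if_pos rfl, zero_add, hτw, ← hq]
            · rw [hτo c hcu hcw, if_neg hcu, if_neg hcw, add_zero, sub_self]
        rw [Finset.sum_congr rfl hterm, Finset.sum_add_distrib,
          Finset.sum_ite_eq' (G.neighborFinset v) u
            (fun _ => |posn σ v - q| - |posn σ v - p|),
          Finset.sum_ite_eq' (G.neighborFinset v) w
            (fun _ => |posn σ v - p| - |posn σ v - q|)]
  have hdd : dsum G τ - dsum G σ = SU + SW + (SU + SW) := by
    rw [dsum, dsum, ← Finset.sum_sub_distrib, Finset.sum_congr rfl (fun v _ => key v),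
      Finset.sum_add_distrib, Finset.sum_add_distrib, Finset.sum_add_distrib,
      Finset.sum_ite_eq' Finset.univ u (fun _ => SU),
      Finset.sum_ite_eq' Finset.univ w (fun _ => SW)]
    have s3 : (∑ v : V, if u ∈ G.neighborFinset v then |posn σ v - q| - |posn σ v - p| else 0)
        = SU := by
      rw [← Finset.sum_filter]
      have hf : Finset.univ.filter (fun v => u ∈ G.neighborFinset v) = G.neighborFinset u := by
        ext x
        simp [SimpleGraph.mem_neighborFinset, SimpleGraph.adj_comm]
      rw [hf, hSUdef]
      exact Finset.sum_congr rfl fun c _ => by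
        rw [abs_sub_comm (posn σ c) q, abs_sub_comm (posn σ c) p]
    have s4 : (∑ v : V, if w ∈ G.neighborFinset v then |posn σ v - p| - |posn σ v - q| else 0)
        = SW := by
      rw [← Finset.sum_filter]
      have hf : Finset.univ.filter (fun v => w ∈ G.neighborFinset v) = G.neighborFinset w := by
        ext x
        simp [SimpleGraph.mem_neighborFinset, SimpleGraph.adj_comm]
      rw [hf, hSWdef]
      exact Finset.sum_congr rfl fun c _ => by
        rw [abs_sub_comm (posn σ c) p, abs_sub_comm (posn σ c) q]
    rw [s3, s4]
    simp
  have h2τ := two_mul_arrCost G τ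
  have h2σ := two_mul_arrCost G σ
  have hds : dsum G τ = dsum G σ + 2 * ((q - p) * (force G σ w - force G σ u)) := by
    rw [hSU, hSW] at hdd; linarith
  linarith

noncomputable def rnk (v : V) : ℤ := (((Fintype.equivFin (Finset V)) (G.neighborFinset v) : Fin _) : ℕ)

lemma rnk_inj {a b : V} (h : rnk G a = rnk G b) :
    G.neighborFinset a = G.neighborFinset b :=
  (Fintype.equivFin (Finset V)).injective (Fin.ext (Nat.cast_injective h))

variable (C : Set V)

noncomputable def phi [DecidablePred (· ∈ C)] (σ : V ≃ Fin (Fintype.card V)) : ℤ :=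
  ∑ x : V, if x ∈ C then 0 else posn σ x * rnk G x

lemma phi_swap [DecidablePred (· ∈ C)] (σ : V ≃ Fin (Fintype.card V)) {a b : V}
    (ha : a ∉ C) (hb : b ∉ C) (hab : a ≠ b) :
    phi G C ((Equiv.swap a b).trans σ)
      = phi G C σ + (posn σ b - posn σ a) * (rnk G a - rnk G b) := by
  set τ := (Equiv.swap a b).trans σ with hτdef
  have hτa : posn τ a = posn σ b := by simp [hτdef, posn]
  have hτb : posn τ b = posn σ a := by simp [hτdef, posn]
  have hτo : ∀ x : V, x ≠ a → x ≠ b → posn τ x = posn σ x := fun x h1 h2 => by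
    simp [hτdef, posn, Equiv.swap_apply_of_ne_of_ne h1 h2]
  have key : ∀ x : V,
      ((if x ∈ C then 0 else posn τ x * rnk G x) - (if x ∈ C then 0 else posn σ x * rnk G x))
      = (if x = a then (posn σ b - posn σ a) * rnk G a else 0)
        + (if x = b then (posn σ a - posn σ b) * rnk G b else 0) := by
    intro x
    by_cases hxa : x = a
    · subst hxa
      rw [if_pos rfl, if_neg hab, if_neg ha, if_neg ha, hτa, add_zero]
      ring
    · by_cases hxb : x = b
      · subst hxb
        rw [if_neg hxa, if_pos rfl, if_neg hb, if_neg hb, hτb, zero_add]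
        ring
      · rw [if_neg hxa, if_neg hxb, hτo x hxa hxb, add_zero, sub_self]
  have hd : phi G C τ - phi G C σ
      = (posn σ b - posn σ a) * rnk G a + (posn σ a - posn σ b) * rnk G b := by
    rw [phi, phi, ← Finset.sum_sub_distrib, Finset.sum_congr rfl (fun x _ => key x),
      Finset.sum_add_distrib,
      Finset.sum_ite_eq' Finset.univ a (fun _ => (posn σ b - posn σ a) * rnk G a),
      Finset.sum_ite_eq' Finset.univ b (fun _ => (posn σ a - posn σ b) * rnk G b)]
    simp
  have : (posn σ b - posn σ a) * rnk G a + (posn σ a - posn σ b) * rnk G b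
      = (posn σ b - posn σ a) * (rnk G a - rnk G b) := by ring
  linarith [hd, this.symm.le, this.le]

lemma gap_H (hC : ∀ u v : V, G.Adj u v → u ∈ C ∨ v ∈ C) (σ : V ≃ Fin (Fintype.card V))
    {u w : V} (hu : u ∉ C) (hw : w ∉ C)
    (hgap : ∀ c ∈ C, ¬ (σ u < σ c ∧ σ c < σ w)) :
    ∀ c : V, G.Adj u c ∨ G.Adj w c → posn σ c < posn σ u ∨ posn σ w < posn σ c := by
  intro c hc
  have hcC : c ∈ C := by
    rcases hc with h | h
    · rcases hC u c h with h' | h'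
      · exact absurd h' hu
      · exact h'
    · rcases hC w c h with h' | h'
      · exact absurd h' hw
      · exact h'
  have h1 := hgap c hcC
  have hcu : c ≠ u := fun h => hu (h ▸ hcC)
  have hcw : c ≠ w := fun h => hw (h ▸ hcC)
  rcases lt_or_ge (σ c) (σ u) with h | h
  · exact Or.inl ((posn_lt_iff σ).2 h)
  · right
    apply (posn_lt_iff σ).2
    have h2 : σ u < σ c :=
      lt_of_le_of_ne h (fun e => hcu (σ.injective e.symm))
    have h3 : ¬ σ c < σ w := fun hx => h1 ⟨h2, hx⟩
    exact lt_of_le_of_ne (le_of_not_gt h3) (fun e => hcw (σ.injective e.symm))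

lemma force_mono (hC : ∀ u v : V, G.Adj u v → u ∈ C ∨ v ∈ C)
    (σ : V ≃ Fin (Fintype.card V)) (hopt : ∀ τ, arrCost G σ ≤ arrCost G τ)
    {u w : V} (hu : u ∉ C) (hw : w ∉ C) (hlt : σ u < σ w)
    (hgap : ∀ c ∈ C, ¬ (σ u < σ c ∧ σ c < σ w)) :
    force G σ u ≤ force G σ w := by
  have hAdj : ¬ G.Adj u w := fun h => by
    rcases hC u w h with h' | h'
    · exact hu h'
    · exact hw h'
  have hc := arrCost_swap G σ hAdj hlt (gap_H G C hC σ hu hw hgap)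
  have h0 := hopt ((Equiv.swap u w).trans σ)
  have hq : 0 < posn σ w - posn σ u := by
    have := (posn_lt_iff σ).2 hlt
    linarith
  by_contra hcon
  push_neg at hcon
  have : (posn σ w - posn σ u) * (force G σ w - force G σ u) < 0 :=
    mul_neg_of_pos_of_neg hq (by linarith)
  linarith

lemma force_congr (σ : V ≃ Fin (Fintype.card V)) {u w : V}
    (hN : G.neighborFinset u = G.neighborFinset w)
    (Hside : ∀ c ∈ G.neighborFinset u, σ c < σ u ∨ σ w < σ c) (hlt : σ u < σ w) :
    force G σ u = force G σ w := by
  rw [force, force, ← hN]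
  have e1 : (G.neighborFinset u).filter (fun c => σ u < σ c)
      = (G.neighborFinset u).filter (fun c => σ w < σ c) := by
    refine Finset.filter_congr fun c hc => ?_
    constructor
    · intro h
      rcases Hside c hc with h' | h'
      · exact absurd h (not_lt.2 (le_of_lt h'))
      · exact h'
    · intro h
      exact lt_trans hlt h
  have e2 : (G.neighborFinset u).filter (fun c => σ c < σ u)
      = (G.neighborFinset u).filter (fun c => σ c < σ w) := by
    refine Finset.filter_congr fun c hc => ?_
    constructor
    · intro h
      exact lt_trans h hlt
    · intro h
      rcases Hside c hc with h' | h'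
      · exact h'
      · exact absurd h (not_lt.2 (le_of_lt h'))
  rw [e1, e2]

end Aux

/-- every graph with a vertex cover `C` has an optimal linear arrangement
that is super-homogeneous with respect to `C`. -/
theorem stmt_12 {V : Type*} [Fintype V] [DecidableEq V]
    (G : SimpleGraph V) [DecidableRel G.Adj]
    (C : Set V) (hC : ∀ u v : V, G.Adj u v → u ∈ C ∨ v ∈ C) :
    ∃ σ : V ≃ Fin (Fintype.card V),
      (∀ τ : V ≃ Fin (Fintype.card V), arrCost G σ ≤ arrCost G τ) ∧
      SuperHomogeneous G C σ := by
  classical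
  haveI : Nonempty (V ≃ Fin (Fintype.card V)) := ⟨Fintype.equivFin V⟩
  obtain ⟨σ0, -, h0⟩ := Finset.exists_min_image
    (Finset.univ : Finset (V ≃ Fin (Fintype.card V))) (arrCost G) Finset.univ_nonempty
  obtain ⟨σ, hσS, hφ⟩ := Finset.exists_min_image
    (Finset.univ.filter fun τ => arrCost G τ = arrCost G σ0) (phi G C)
    ⟨σ0, by simp⟩
  have hσ0 : arrCost G σ = arrCost G σ0 := (Finset.mem_filter.1 hσS).2
  have hopt : ∀ τ, arrCost G σ ≤ arrCost G τ := fun τ => hσ0 ▸ h0 τ (Finset.mem_univ τ)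
  refine ⟨σ, hopt, ?_, fun u w hu hw hlt hgap => force_mono G C hC σ hopt hu hw hlt hgap⟩
  intro u v w hu hv hw huv hvw hN hgap
  have huw : σ u < σ w := huv.trans hvw
  have hNf : G.neighborFinset u = G.neighborFinset w := by
    ext a
    rw [SimpleGraph.mem_neighborFinset, SimpleGraph.mem_neighborFinset,
      ← SimpleGraph.mem_neighborSet, ← SimpleGraph.mem_neighborSet, hN]
  have Hside : ∀ c ∈ G.neighborFinset u, σ c < σ u ∨ σ w < σ c := by
    intro c hc
    have hadj : G.Adj u c := (SimpleGraph.mem_neighborFinset _ _ _).1 hc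
    rcases gap_H G C hC σ hu hw hgap c (Or.inl hadj) with h | h
    · exact Or.inl ((posn_lt_iff σ).1 h)
    · exact Or.inr ((posn_lt_iff σ).1 h)
  have hfuw : force G σ u = force G σ w := force_congr G σ hNf Hside huw
  have hgap1 : ∀ c ∈ C, ¬ (σ u < σ c ∧ σ c < σ v) :=
    fun c hc h => hgap c hc ⟨h.1, h.2.trans hvw⟩
  have hgap2 : ∀ c ∈ C, ¬ (σ v < σ c ∧ σ c < σ w) :=
    fun c hc h => hgap c hc ⟨huv.trans h.1, h.2⟩
  have h1 := force_mono G C hC σ hopt hu hv huv hgap1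
  have h2 := force_mono G C hC σ hopt hv hw hvw hgap2
  have hfvu : force G σ v = force G σ u := le_antisymm (hfuw ▸ h2) h1
  have hne_uv : u ≠ v := fun h => absurd huv (by rw [h]; exact lt_irrefl _)
  have hne_vw : v ≠ w := fun h => absurd hvw (by rw [h]; exact lt_irrefl _)
  have hAdjuv : ¬ G.Adj u v := fun h => by
    rcases hC u v h with h' | h'
    · exact hu h'
    · exact hv h'
  have hAdjvw : ¬ G.Adj v w := fun h => by
    rcases hC v w h with h' | h'
    · exact hv h'
    · exact hw h'
  -- swap u v preserves cost
  have hc1 : arrCost G ((Equiv.swap u v).trans σ) = arrCost G σ := by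
    rw [arrCost_swap G σ hAdjuv huv (gap_H G C hC σ hu hv hgap1), hfvu]
    ring
  have hmem1 : (Equiv.swap u v).trans σ
      ∈ Finset.univ.filter fun τ => arrCost G τ = arrCost G σ0 :=
    Finset.mem_filter.2 ⟨Finset.mem_univ _, by rw [hc1, hσ0]⟩
  have hp1 := hφ _ hmem1
  rw [phi_swap G C σ hu hv hne_uv] at hp1
  have hquv : 0 < posn σ v - posn σ u := by
    have := (posn_lt_iff σ).2 huv
    linarith
  have hr1 : rnk G v ≤ rnk G u := by
    by_contra hcon
    push_neg at hcon
    have : (posn σ v - posn σ u) * (rnk G u - rnk G v) < 0 :=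
      mul_neg_of_pos_of_neg hquv (by linarith)
    linarith
  -- swap v w preserves cost
  have hfwv : force G σ w - force G σ v = 0 := by
    rw [← hfuw, hfvu]; ring
  have hc2 : arrCost G ((Equiv.swap v w).trans σ) = arrCost G σ := by
    rw [arrCost_swap G σ hAdjvw hvw (gap_H G C hC σ hv hw hgap2), hfwv]
    ring
  have hmem2 : (Equiv.swap v w).trans σ
      ∈ Finset.univ.filter fun τ => arrCost G τ = arrCost G σ0 :=
    Finset.mem_filter.2 ⟨Finset.mem_univ _, by rw [hc2, hσ0]⟩
  have hp2 := hφ _ hmem2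
  rw [phi_swap G C σ hv hw hne_vw] at hp2
  have hqvw : 0 < posn σ w - posn σ v := by
    have := (posn_lt_iff σ).2 hvw
    linarith
  have hr2 : rnk G w ≤ rnk G v := by
    by_contra hcon
    push_neg at hcon
    have : (posn σ w - posn σ v) * (rnk G v - rnk G w) < 0 :=
      mul_neg_of_pos_of_neg hqvw (by linarith)
    linarith
  have hruw : rnk G u = rnk G w := by rw [rnk, rnk, hNf]
  have hrv : rnk G v = rnk G u := le_antisymm hr1 (hruw ▸ hr2)
  have hNvu : G.neighborFinset v = G.neighborFinset u := rnk_inj G hrv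
  ext a
  rw [SimpleGraph.mem_neighborSet, SimpleGraph.mem_neighborSet,
    ← SimpleGraph.mem_neighborFinset, ← SimpleGraph.mem_neighborFinset, hNvu]
end
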